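/- arXiv:2004.04556 — 3 statements merged into one kernel-verified Lean document; each statement's English description precedes it below -/
import Mathlib

section
/- For |s| < 1, π·cot(πs) = 1/s - 2·∑_{j=1}^∞ ζ(2j)·s^{2j-1}, where the series converges absolutely for |s| < 1. -/
/-!
Start from the Mittag-Leffler expansion `π cot πx = 1/x + ∑_{n ≥ 1} (1/(x - n) + 1/(x + n))`
(Mathlib's `cot_series_rep'`), whose `n`-th term is `-2x/(n² - x²)`. For `|x| < 1` expand
`x/(n² - x²) = ∑_{j ≥ 0} x^(2j+1)/n^(2j+2)` geometrically and sum over `n` first: the double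
series converges absolutely because `ζ(2j+2) ≤ ζ(2)`, so its `j`-th column sum
`ζ(2j+2) |x|^(2j+1)` is dominated by a geometric series. Exchanging the order of summation
gives the power series.
-/

open scoped BigOperators

/-- ζ(p) = ∑_{n=1}^∞ 1/n^p -/
noncomputable def zetaR (p : ℕ) : ℝ := ∑' n : ℕ, 1 / ((n : ℝ) + 1) ^ p

lemma summable_one_div_succ_pow {p : ℕ} (hp : 1 < p) :
    Summable (fun n : ℕ => 1 / ((n : ℝ) + 1) ^ p) := by
  simpa using (summable_nat_add_iff 1).2 (Real.summable_one_div_nat_pow.2 hp)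

lemma zetaR_nonneg (p : ℕ) : 0 ≤ zetaR p := tsum_nonneg fun n => by positivity

lemma zetaR_le_zetaR {p q : ℕ} (hp : 1 < p) (hpq : p ≤ q) : zetaR q ≤ zetaR p :=
  (summable_one_div_succ_pow (hp.trans_le hpq)).tsum_le_tsum
    (fun n => one_div_pow_le_one_div_pow_of_le (by simp) hpq) (summable_one_div_succ_pow hp)

lemma zetaR_mul_eq_tsum (p : ℕ) (c : ℝ) : zetaR p * c = ∑' n : ℕ, c / ((n : ℝ) + 1) ^ p := by
  rw [zetaR, ← tsum_mul_right]
  simp only [one_div_mul_eq_div]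

lemma hasSum_odd_pow_div_pow {s a : ℝ} (hsa : |s| < a) :
    HasSum (fun j : ℕ => s ^ (2 * j + 1) / a ^ (2 * (j + 1))) (s / (a ^ 2 - s ^ 2)) := by
  have ha : 0 < a := (abs_nonneg s).trans_lt hsa
  have hsq : s ^ 2 < a ^ 2 := sq_lt_sq' (abs_lt.1 hsa).1 (abs_lt.1 hsa).2
  have hterm : (fun j : ℕ => s ^ (2 * j + 1) / a ^ (2 * (j + 1)))
      = fun j => s / a ^ 2 * (s ^ 2 / a ^ 2) ^ j := by
    funext j
    rw [div_pow, ← pow_mul, ← pow_mul]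
    field_simp
    ring
  have hval : s / (a ^ 2 - s ^ 2) = s / a ^ 2 * (1 - s ^ 2 / a ^ 2)⁻¹ := by
    have : a ^ 2 - s ^ 2 ≠ 0 := by linarith
    field_simp
  rw [hterm, hval]
  exact (hasSum_geometric_of_lt_one (by positivity) ((div_lt_one (by positivity)).2 hsq)).mul_left _

lemma Real.hasSum_pi_mul_cot_sub_inv {x : ℝ} (hx : ∀ n : ℤ, x ≠ n) :
    HasSum (fun n : ℕ => 1 / (x - (n + 1)) + 1 / (x + (n + 1)))
      (Real.pi * Real.cot (Real.pi * x) - 1 / x) := by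
  have hxC : (x : ℂ) ∈ Complex.integerComplement := by
    rintro ⟨n, hn⟩
    exact hx n (by exact_mod_cast hn.symm)
  rw [← Complex.hasSum_ofReal]
  push_cast
  exact (cot_series_rep' hxC) ▸ (summable_cotTerm hxC).hasSum

lemma Real.pi_mul_cot_eq_inv_sub_tsum {x : ℝ} (hx : ∀ n : ℤ, x ≠ n) :
    Real.pi * Real.cot (Real.pi * x) = 1 / x - 2 * ∑' n : ℕ, x / (((n : ℝ) + 1) ^ 2 - x ^ 2) := by
  have hterm : ∀ n : ℕ, 1 / (x - (n + 1)) + 1 / (x + (n + 1))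
      = -2 * (x / (((n : ℝ) + 1) ^ 2 - x ^ 2)) := by
    intro n
    have h₁ : x - (n + 1) ≠ 0 := sub_ne_zero.2 (by exact_mod_cast hx (n + 1))
    have h₂ : x + (n + 1) ≠ 0 := by
      rw [← sub_neg_eq_add]; exact sub_ne_zero.2 (by exact_mod_cast hx (-(n + 1)))
    have h₃ : ((n : ℝ) + 1) ^ 2 - x ^ 2 ≠ 0 := by
      rw [sq_sub_sq]; exact mul_ne_zero (by rwa [add_comm]) (by rwa [← neg_sub, neg_ne_zero])
    field_simp
    ring
  have h := (Real.hasSum_pi_mul_cot_sub_inv hx).tsum_eq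
  rw [tsum_congr hterm, tsum_mul_left] at h
  linarith

lemma summable_zetaR_mul_odd_pow {x : ℝ} (hx : |x| < 1) :
    Summable (fun j : ℕ => zetaR (2 * (j + 1)) * |x| ^ (2 * j + 1)) := by
  have hgeom : Summable (fun j : ℕ => zetaR 2 * |x| * (|x| ^ 2) ^ j) :=
    (summable_geometric_of_lt_one (by positivity) (by nlinarith [abs_nonneg x])).mul_left _
  refine Summable.of_nonneg_of_le (fun j => mul_nonneg (zetaR_nonneg _) (by positivity))
    (fun j => ?_) hgeom
  rw [← pow_mul, pow_succ, mul_comm (|x| ^ (2 * j)), ← mul_assoc]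
  gcongr
  exact zetaR_le_zetaR one_lt_two (by omega)

lemma summable_odd_pow_div_succ_pow {x : ℝ} (hx : |x| < 1) :
    Summable (fun p : ℕ × ℕ => x ^ (2 * p.1 + 1) / ((p.2 : ℝ) + 1) ^ (2 * (p.1 + 1))) := by
  have hnorm (j n : ℕ) : ‖x ^ (2 * j + 1) / ((n : ℝ) + 1) ^ (2 * (j + 1))‖
      = |x| ^ (2 * j + 1) / ((n : ℝ) + 1) ^ (2 * (j + 1)) := by
    rw [Real.norm_eq_abs, abs_div, abs_pow, abs_pow, abs_of_pos (a := (n : ℝ) + 1) (by positivity)]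
  refine Summable.of_norm ((summable_prod_of_nonneg fun _ => by positivity).2 ⟨fun j => ?_, ?_⟩)
  · simpa only [hnorm, mul_one_div] using
      (summable_one_div_succ_pow (p := 2 * (j + 1)) (by omega)).mul_left (|x| ^ (2 * j + 1))
  · simpa only [hnorm, ← zetaR_mul_eq_tsum] using summable_zetaR_mul_odd_pow hx

lemma tsum_zetaR_mul_odd_pow {x : ℝ} (hx : |x| < 1) :
    ∑' j : ℕ, zetaR (2 * (j + 1)) * x ^ (2 * j + 1)
      = ∑' n : ℕ, x / (((n : ℝ) + 1) ^ 2 - x ^ 2) := by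
  have hrow (n : ℕ) := (hasSum_odd_pow_div_pow (s := x) (a := (n : ℝ) + 1)
    (hx.trans_le (by simp))).tsum_eq
  simp only [zetaR_mul_eq_tsum, ← hrow]
  exact Summable.tsum_comm (f := fun j (n : ℕ) => x ^ (2 * j + 1) / ((n : ℝ) + 1) ^ (2 * (j + 1)))
    (summable_odd_pow_div_succ_pow hx) |>.symm

/-- For 0 < |s| < 1, π·cot(πs) = 1/s − 2·∑_{j=1}^∞ ζ(2j)·s^{2j−1},
the series converging absolutely. -/
theorem cot_power_series (s : ℝ) (hs : |s| < 1) (hs0 : s ≠ 0) :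
    Real.pi * Real.cot (Real.pi * s) =
      1 / s - 2 * ∑' j : ℕ, zetaR (2 * (j + 1)) * s ^ (2 * (j + 1) - 1) ∧
    Summable (fun j : ℕ => |zetaR (2 * (j + 1)) * s ^ (2 * (j + 1) - 1)|) := by
  have hexp (j : ℕ) : 2 * (j + 1) - 1 = 2 * j + 1 := by omega
  have hs_int : ∀ n : ℤ, s ≠ n := by
    rintro n rfl
    have : |n| < 1 := by exact_mod_cast hs
    exact hs0 (by simp [Int.abs_lt_one_iff.1 this])
  simp only [hexp, abs_mul, abs_pow, abs_of_nonneg (zetaR_nonneg _)]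
  exact ⟨by rw [tsum_zetaR_mul_odd_pow hs]; exact Real.pi_mul_cot_eq_inv_sub_tsum hs_int,
    summable_zetaR_mul_odd_pow hs⟩
end

section
/- ∑_{n=1}^∞ h_n/n² = (7/2)·ζ(3), where h_n = ∑_{k=1}^n 1/(k-1/2). -/
open scoped BigOperators

/-- Odd harmonic number h_n^{(p)} = ∑_{k=1}^n 1/(k−1/2)^p -/
noncomputable def oddH (p n : ℕ) : ℝ := ∑ k ∈ Finset.range n, 1 / ((k : ℝ) + 1 / 2) ^ p

/-- Alternating odd harmonic number h̄_n^{(p)} = ∑_{k=1}^n (−1)^{k−1}/(k−1/2)^p -/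
noncomputable def altOddH (p n : ℕ) : ℝ :=
  ∑ k ∈ Finset.range n, (-1 : ℝ) ^ k / ((k : ℝ) + 1 / 2) ^ p

/-- Dirichlet beta β(s) = ∑_{n=0}^∞ (−1)^n/(2n+1)^s -/
noncomputable def betaD (s : ℕ) : ℝ := ∑' n : ℕ, (-1 : ℝ) ^ n / (2 * (n : ℝ) + 1) ^ s

/-!
Let `K(x, y) = 1 / (x y (x + y))` and `T(c, d) = ∑_{j,k ≥ 0} K(j + c, k + d)`. For a positive
integer `n` the row `∑_k K(n, k + c)` telescopes to `(∑_{i<n} 1/(i + c)) / n²`, so `T(1, 1/2)` is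
the series `S` of the theorem. Summing instead along the antidiagonals `j + k = N`, where
`K(x, y) = (1/x + 1/y) / (x + y)²`, gives `T(1/2, 1/2) = 2 S`; for `c = 1` the two evaluations of
`T(1, 1)` differ by an index shift and yield Euler's `T(1, 1) = ∑ H_n / n² = 2 ζ(3)`.
Finally `K` is homogeneous of degree `-3` and the positive half-integers are the integers together
with the odd halves, so `T(1/2, 1/2) + 2 T(1, 1/2) + T(1, 1) = 8 T(1, 1)`, i.e. `4 S = 14 ζ(3)`.
-/

open Finset Filter Topology

theorem HasSum.sum_antidiagonal {A α : Type*} [AddCommMonoid A] [HasAntidiagonal A]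
    [AddCommMonoid α] [TopologicalSpace α] [ContinuousAdd α] [RegularSpace α]
    {f : A × A → α} {a : α} (hf : HasSum f a) : HasSum (fun n ↦ ∑ p ∈ antidiagonal n, f p) a :=
  (HasAntidiagonal.sigmaAntidiagonalEquivProd.hasSum_iff.2 hf).sigma fun n ↦
    (antidiagonal n).hasSum f

theorem HasSum.even_add_odd_prod {α : Type*} [AddCommMonoid α] [TopologicalSpace α]
    [ContinuousAdd α] {f : ℕ × ℕ → α} {a b c d : α}
    (hee : HasSum (fun p : ℕ × ℕ ↦ f (2 * p.1, 2 * p.2)) a)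
    (heo : HasSum (fun p : ℕ × ℕ ↦ f (2 * p.1, 2 * p.2 + 1)) b)
    (hoe : HasSum (fun p : ℕ × ℕ ↦ f (2 * p.1 + 1, 2 * p.2)) c)
    (hoo : HasSum (fun p : ℕ × ℕ ↦ f (2 * p.1 + 1, 2 * p.2 + 1)) d) :
    HasSum f (a + b + (c + d)) := by
  let e : (ℕ × ℕ ⊕ ℕ × ℕ) ⊕ (ℕ × ℕ ⊕ ℕ × ℕ) ≃ ℕ × ℕ :=
    ((Equiv.sumCongr (Equiv.prodSumDistrib ℕ ℕ ℕ) (Equiv.prodSumDistrib ℕ ℕ ℕ)).symm.trans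
      (Equiv.sumProdDistrib ℕ ℕ (ℕ ⊕ ℕ)).symm).trans
      (Equiv.prodCongr Equiv.natSumNatEquivNat Equiv.natSumNatEquivNat)
  exact e.hasSum_iff.1 ((hee.sum heo).sum (hoe.sum hoo))

theorem hasSum_sub_nat_add {f : ℕ → ℝ} (hf : Antitone f) (hf0 : Tendsto f atTop (𝓝 0))
    (t : ℕ) : HasSum (fun m ↦ f m - f (m + t)) (∑ i ∈ range t, f i) := by
  induction t with
  | zero => simp
  | succ t ih =>
    have step : HasSum (fun m ↦ f (m + t) - f (m + 1 + t)) (f t) := by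
      rw [hasSum_iff_tendsto_nat_of_nonneg (fun m ↦ sub_nonneg.2 (hf (by omega)))]
      simp_rw [Finset.sum_range_sub' (fun m ↦ f (m + t)), zero_add]
      simpa using tendsto_const_nhds.sub (hf0.comp (tendsto_add_atTop_nat t))
    convert ih.add step using 1
    · ext m; rw [show m + 1 + t = m + (t + 1) by omega]; ring
    · exact sum_range_succ f t

noncomputable def tornheim (x y : ℝ) : ℝ := 1 / (x * y * (x + y))

theorem tornheim_comm (x y : ℝ) : tornheim x y = tornheim y x := by
  rw [tornheim, tornheim, mul_comm x, add_comm x]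

theorem tornheim_nonneg {x y : ℝ} (hx : 0 ≤ x) (hy : 0 ≤ y) : 0 ≤ tornheim x y := by
  unfold tornheim; positivity

theorem tornheim_half (x y : ℝ) : tornheim (x / 2) (y / 2) = 8 * tornheim x y := by
  rw [tornheim, tornheim, show x / 2 * (y / 2) * (x / 2 + y / 2) = x * y * (x + y) / 8 by ring,
    one_div_div, mul_one_div]

theorem tornheim_le_rpow {x y : ℝ} (hx : 0 < x) (hy : 0 < y) :
    tornheim x y ≤ 1 / x ^ (3 / 2 : ℝ) * (1 / y ^ (3 / 2 : ℝ)) := by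
  rw [one_div_mul_one_div, ← Real.mul_rpow hx.le hy.le,
    show (3 / 2 : ℝ) = 1 + 1 / 2 by norm_num, Real.rpow_add (by positivity), Real.rpow_one,
    ← Real.sqrt_eq_rpow, tornheim]
  gcongr
  exact Real.sqrt_le_iff.2 ⟨by positivity, by nlinarith⟩

theorem summable_tornheim_nat_add {c d : ℝ} (hc : 0 < c) (hd : 0 < d) :
    Summable fun p : ℕ × ℕ ↦ tornheim (p.1 + c) (p.2 + d) := by
  have h32 {a : ℝ} (ha : 0 < a) :
      Summable fun n : ℕ ↦ 1 / ((n : ℝ) + a) ^ (3 / 2 : ℝ) := by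
    refine ((Real.summable_one_div_nat_add_rpow a (3 / 2)).2 (by norm_num)).congr fun n ↦ ?_
    rw [abs_of_pos (by positivity)]
  refine .of_nonneg_of_le (fun p ↦ tornheim_nonneg (by positivity) (by positivity))
    (fun p ↦ tornheim_le_rpow (by positivity) (by positivity))
    ((h32 hc).mul_of_nonneg (h32 hd) (fun n ↦ by positivity) (fun n ↦ by positivity))

noncomputable def tornheimSum (c d : ℝ) : ℝ := ∑' p : ℕ × ℕ, tornheim (p.1 + c) (p.2 + d)

theorem hasSum_tornheimSum {c d : ℝ} (hc : 0 < c) (hd : 0 < d) :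
    HasSum (fun p : ℕ × ℕ ↦ tornheim (p.1 + c) (p.2 + d)) (tornheimSum c d) :=
  (summable_tornheim_nat_add hc hd).hasSum

theorem tornheimSum_comm (c d : ℝ) : tornheimSum c d = tornheimSum d c := by
  rw [tornheimSum, ← (Equiv.prodComm ℕ ℕ).tsum_eq]
  simp [tornheimSum, tornheim_comm]

noncomputable def shiftedHarmonic (c : ℝ) (n : ℕ) : ℝ := ∑ i ∈ range n, 1 / ((i : ℝ) + c)

theorem hasSum_tornheim_natCast {c : ℝ} (hc : 0 < c) (t : ℕ) :
    HasSum (fun j : ℕ ↦ tornheim t (j + c)) (shiftedHarmonic c t / t ^ 2) := by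
  have hanti : Antitone fun m : ℕ ↦ 1 / ((m : ℝ) + c) :=
    fun m n hmn ↦ one_div_le_one_div_of_le (by positivity) (by gcongr)
  have hlim : Tendsto (fun m : ℕ ↦ 1 / ((m : ℝ) + c)) atTop (𝓝 0) :=
    tendsto_const_nhds.div_atTop
      (tendsto_atTop_add_const_right _ c tendsto_natCast_atTop_atTop)
  refine ((hasSum_sub_nat_add hanti hlim t).div_const ((t : ℝ) ^ 2)).congr_fun fun j ↦ ?_
  rcases Nat.eq_zero_or_pos t with rfl | ht
  · simp [tornheim]
  · have : (0 : ℝ) < t := by exact_mod_cast ht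
    rw [tornheim]
    push_cast
    field_simp
    ring

theorem hasSum_tornheimSum_one_left {c : ℝ} (hc : 0 < c) :
    HasSum (fun n : ℕ ↦ shiftedHarmonic c (n + 1) / ((n : ℝ) + 1) ^ 2) (tornheimSum 1 c) :=
  (hasSum_tornheimSum one_pos hc).prod_fiberwise fun n ↦ by
    simpa using hasSum_tornheim_natCast hc (n + 1)

theorem sum_antidiagonal_tornheim {c : ℝ} (hc : 0 < c) (n : ℕ) :
    ∑ p ∈ antidiagonal n, tornheim (p.1 + c) (p.2 + c)
      = 2 * shiftedHarmonic c (n + 1) / (n + 2 * c) ^ 2 := by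
  have hterm : ∀ p ∈ antidiagonal n, tornheim (p.1 + c) (p.2 + c)
      = (1 / ((p.1 : ℝ) + c) + 1 / ((p.2 : ℝ) + c)) / (n + 2 * c) ^ 2 := by
    intro p hp
    have hn : (n : ℝ) = p.1 + p.2 := by exact_mod_cast (mem_antidiagonal.1 hp).symm
    rw [tornheim, hn]
    field_simp
    ring
  have hswap : ∑ p ∈ antidiagonal n, 1 / ((p.2 : ℝ) + c)
      = ∑ p ∈ antidiagonal n, 1 / ((p.1 : ℝ) + c) :=
    Nat.sum_antidiagonal_swap (f := fun p ↦ 1 / ((p.1 : ℝ) + c))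
  rw [sum_congr rfl hterm, ← sum_div, sum_add_distrib, hswap, ← two_mul, shiftedHarmonic,
    Nat.sum_antidiagonal_eq_sum_range_succ_mk]

theorem hasSum_tornheimSum_self {c : ℝ} (hc : 0 < c) :
    HasSum (fun n : ℕ ↦ 2 * shiftedHarmonic c (n + 1) / ((n : ℝ) + 2 * c) ^ 2)
      (tornheimSum c c) := by
  simpa only [sum_antidiagonal_tornheim hc] using (hasSum_tornheimSum hc hc).sum_antidiagonal

theorem tornheimSum_parity :
    tornheimSum (1 / 2) (1 / 2) + tornheimSum (1 / 2) 1 + (tornheimSum 1 (1 / 2) + tornheimSum 1 1)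
      = 8 * tornheimSum 1 1 := by
  have hscaled : HasSum (fun p : ℕ × ℕ ↦ tornheim ((p.1 + 1) / 2) ((p.2 + 1) / 2))
      (8 * tornheimSum 1 1) :=
    ((hasSum_tornheimSum one_pos one_pos).mul_left 8).congr_fun fun p ↦ tornheim_half _ _
  -- `(p + 1) / 2` is `j + 1/2` for `p = 2 j` and `n + 1` for `p = 2 n + 1`
  refine (HasSum.even_add_odd_prod ?_ ?_ ?_ ?_).unique hscaled
  all_goals
    refine (hasSum_tornheimSum (by norm_num) (by norm_num)).congr_fun fun p ↦ ?_
    push_cast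
    ring_nf

theorem tornheimSum_one_one : tornheimSum 1 1 = 2 * zetaR 3 := by
  have hzeta : HasSum (fun n : ℕ ↦ 1 / ((n : ℝ) + 1) ^ 3) (zetaR 3) := by
    refine Summable.hasSum ?_
    exact_mod_cast (summable_nat_add_iff 1).2 (Real.summable_one_div_nat_pow.2 (by norm_num))
  have hrow := (hasSum_nat_add_iff' 1).2 (hasSum_tornheimSum_one_left one_pos)
  have hdiag := ((hasSum_tornheimSum_self one_pos).div_const 2).add
    ((hasSum_nat_add_iff' 1).2 hzeta)
  have hshift := hrow.unique (hdiag.congr_fun fun n ↦ ?_)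
  · have hH1 : shiftedHarmonic 1 1 = 1 := by simp [shiftedHarmonic]
    simp only [sum_range_one, zero_add, hH1, Nat.cast_zero, one_pow, div_one] at hshift
    linarith
  · rw [shiftedHarmonic, sum_range_succ, ← shiftedHarmonic]
    push_cast
    field_simp
    ring

/-- ∑_{n=1}^∞ h_n/n² = (7/2)ζ(3) -/
theorem linear_T_sum_12 :
    (∑' n : ℕ, oddH 1 (n + 1) / ((n : ℝ) + 1) ^ 2) = 7 / 2 * zetaR 3 := by
  have hodd (n : ℕ) : oddH 1 n = shiftedHarmonic (1 / 2) n := by simp [oddH, shiftedHarmonic]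
  have hrow : HasSum (fun n : ℕ ↦ oddH 1 (n + 1) / ((n : ℝ) + 1) ^ 2)
      (tornheimSum 1 (1 / 2)) := by
    simpa only [hodd] using hasSum_tornheimSum_one_left (c := 1 / 2) (by norm_num)
  have hdiag : HasSum (fun n : ℕ ↦ oddH 1 (n + 1) / ((n : ℝ) + 1) ^ 2)
      (tornheimSum (1 / 2) (1 / 2) / 2) :=
    ((hasSum_tornheimSum_self (c := 1 / 2) (by norm_num)).div_const 2).congr_fun fun n ↦ by
      rw [hodd]; ring
  rw [hrow.tsum_eq]
  linarith [hdiag.unique hrow, tornheimSum_parity, tornheimSum_comm (1 / 2) 1, tornheimSum_one_one]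
end

section
/- ∑_{n=1}^∞ h_{n-1}/(n-1/2)² = π²·log 2 - (7/2)·ζ(3), where h_n = ∑_{k=1}^n 1/(k-1/2) and h_0 = 0. -/
open scoped BigOperators

open Filter Topology Finset

noncomputable def bb (k : ℕ) : ℝ := 1 / ((k : ℝ) + 1 / 2)
noncomputable def cc (k : ℕ) : ℝ := 1 / ((k : ℝ) + 1)

lemma bb_pos (k : ℕ) : 0 < bb k := by unfold bb; positivity
lemma cc_pos (k : ℕ) : 0 < cc k := by unfold cc; positivity

lemma cc_le_bb (k : ℕ) : cc k ≤ bb k := by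
  unfold bb cc; gcongr; norm_num

lemma bb_le_two_cc (k : ℕ) : bb k ≤ 2 * cc k := by
  unfold bb cc
  rw [mul_one_div, div_le_div_iff₀ (by positivity) (by positivity)]
  have : (0:ℝ) ≤ (k:ℝ) := Nat.cast_nonneg k
  linarith

lemma oddH_succ (n : ℕ) : oddH 1 (n + 1) = oddH 1 n + bb n := by
  unfold oddH bb; rw [Finset.sum_range_succ, pow_one]

lemma oddH_nonneg (n : ℕ) : 0 ≤ oddH 1 n := by
  unfold oddH
  apply Finset.sum_nonneg
  intro i _
  positivity

-- log 2 as limit of H_{2n} - H_n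
lemma tendsto_H2_sub_H :
    Tendsto (fun n : ℕ => (harmonic (2*n) : ℝ) - (harmonic n : ℝ)) atTop (𝓝 (Real.log 2)) := by
  have hmul : Tendsto (fun n : ℕ => 2 * n) atTop atTop :=
    tendsto_atTop_mono (fun n => (by simp; omega : id n ≤ 2*n)) tendsto_id
  have h2 : Tendsto (fun n : ℕ => (harmonic (2*n) : ℝ) - Real.log ((2*n : ℕ) : ℝ)) atTop
      (𝓝 Real.eulerMascheroniConstant) := Real.tendsto_harmonic_sub_log.comp hmul
  have hd := h2.sub Real.tendsto_harmonic_sub_log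
  rw [sub_self] at hd
  have hfin := hd.add (tendsto_const_nhds (x := Real.log 2))
  rw [zero_add] at hfin
  apply hfin.congr'
  filter_upwards [eventually_ge_atTop 1] with n hn
  have hn0 : (n : ℝ) ≠ 0 := Nat.cast_ne_zero.mpr (by omega)
  push_cast
  rw [Real.log_mul two_ne_zero hn0]
  ring

lemma hasSum_two_log_two : HasSum (fun k => bb k - cc k) (2 * Real.log 2) := by
  have hnn : ∀ i, 0 ≤ bb i - cc i := fun i => sub_nonneg.2 (cc_le_bb i)
  rw [hasSum_iff_tendsto_nat_of_nonneg hnn]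
  have key : ∀ N, ∑ k ∈ Finset.range N, (bb k - cc k)
      = 2 * ((harmonic (2*N) : ℝ) - (harmonic N : ℝ)) := by
    intro N
    induction N with
    | zero => simp
    | succ n ih =>
      rw [Finset.sum_range_succ, ih]
      have e1 : harmonic (2*(n+1)) = harmonic (2*n) + ((2*n+1 : ℕ) : ℚ)⁻¹ + ((2*n+2 : ℕ) : ℚ)⁻¹ := by
        rw [show 2*(n+1) = (2*n+1)+1 from by ring, harmonic_succ, harmonic_succ]
      rw [e1, harmonic_succ]
      unfold bb cc
      push_cast
      have h1 : ((2:ℝ)*n+1) ≠ 0 := by positivity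
      have h2 : ((2:ℝ)*n+2) ≠ 0 := by positivity
      have h3 : ((n:ℝ)+1/2) ≠ 0 := by positivity
      have h4 : ((n:ℝ)+1) ≠ 0 := by positivity
      field_simp
      ring
  simp_rw [key]
  exact tendsto_H2_sub_H.const_mul 2

lemma bb_anti : ∀ ⦃k l : ℕ⦄, k ≤ l → bb l ≤ bb k := by
  intro k l h
  unfold bb
  gcongr

lemma cc_anti : ∀ ⦃k l : ℕ⦄, k ≤ l → cc l ≤ cc k := by
  intro k l h
  unfold cc
  gcongr

lemma bb_tendsto : Tendsto bb atTop (𝓝 0) := by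
  apply Tendsto.comp tendsto_inv_atTop_zero (f := fun k : ℕ => ((k:ℝ) + 1/2)) ?_ |>.congr
  · intro k; simp [bb, one_div]
  · exact tendsto_atTop_add_const_right _ _ tendsto_natCast_atTop_atTop

lemma cc_tendsto : Tendsto cc atTop (𝓝 0) := by
  apply Tendsto.comp tendsto_inv_atTop_zero (f := fun k : ℕ => ((k:ℝ) + 1)) ?_ |>.congr
  · intro k; simp [cc, one_div]
  · exact tendsto_atTop_add_const_right _ _ tendsto_natCast_atTop_atTop

/-- Telescoping has-sum for an antitone nonneg-limit sequence. -/
lemma hasSum_telescope {f : ℕ → ℝ} (hanti : ∀ ⦃k l : ℕ⦄, k ≤ l → f l ≤ f k)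
    (h0 : Tendsto f atTop (𝓝 0)) (j : ℕ) :
    HasSum (fun k => f k - f (k + j)) (∑ i ∈ Finset.range j, f i) := by
  rw [hasSum_iff_tendsto_nat_of_nonneg (fun i => sub_nonneg.2 (hanti (Nat.le_add_right i j)))]
  have key : ∀ N : ℕ, ∑ k ∈ Finset.range N, (f k - f (k + j))
      = ∑ i ∈ Finset.range j, f i - ∑ i ∈ Finset.range j, f (N + i) := by
    intro N
    rw [Finset.sum_sub_distrib]
    have h1 : ∑ x ∈ Finset.range (N + j), f x
        = ∑ x ∈ Finset.range N, f x + ∑ x ∈ Finset.range j, f (N + x) :=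
      Finset.sum_range_add f N j
    have h2 : ∑ x ∈ Finset.range (j + N), f x
        = ∑ x ∈ Finset.range j, f x + ∑ x ∈ Finset.range N, f (j + x) :=
      Finset.sum_range_add f j N
    have h3 : ∑ k ∈ Finset.range N, f (k + j) = ∑ k ∈ Finset.range N, f (j + k) := by
      apply Finset.sum_congr rfl; intro k _; rw [Nat.add_comm]
    rw [h3]
    have h4 : ∑ x ∈ Finset.range (N + j), f x = ∑ x ∈ Finset.range (j + N), f x := by
      rw [Nat.add_comm]
    linarith
  simp_rw [key]
  have : Tendsto (fun N => ∑ i ∈ Finset.range j, f (N + i)) atTop (𝓝 0) := by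
    have : Tendsto (fun N => ∑ i ∈ Finset.range j, f (N + i)) atTop
        (𝓝 (∑ i ∈ Finset.range j, (0:ℝ))) := by
      apply tendsto_finset_sum
      intro i _
      exact h0.comp (tendsto_add_atTop_nat i)
    simpa using this
  simpa using tendsto_const_nhds.sub this

lemma oddH_le_sqrt (n : ℕ) : oddH 1 n ≤ 4 * Real.sqrt n := by
  induction n with
  | zero => simp [oddH]
  | succ n ih =>
    rw [oddH_succ]
    have hs : Real.sqrt (n:ℝ) ^ 2 = (n:ℝ) := Real.sq_sqrt (by positivity)
    have ht : Real.sqrt ((n:ℝ)+1) ^ 2 = (n:ℝ)+1 := Real.sq_sqrt (by positivity)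
    have hsn : (0:ℝ) ≤ Real.sqrt (n:ℝ) := Real.sqrt_nonneg _
    have htp : (0:ℝ) < Real.sqrt ((n:ℝ)+1) := Real.sqrt_pos.2 (by positivity)
    have hst : Real.sqrt (n:ℝ) ≤ Real.sqrt ((n:ℝ)+1) := Real.sqrt_le_sqrt (by linarith)
    have hbb : bb n ≤ 4 * Real.sqrt ((n:ℝ)+1) - 4 * Real.sqrt (n:ℝ) := by
      unfold bb
      rw [div_le_iff₀ (by positivity)]
      nlinarith [hs, ht, hsn, htp, hst, sq_nonneg (Real.sqrt ((n:ℝ)+1) - Real.sqrt (n:ℝ)),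
        sq_nonneg (Real.sqrt ((n:ℝ)+1) - 1), sq_nonneg (Real.sqrt (n:ℝ) - 1)]
    have hc : ((n+1 : ℕ) : ℝ) = (n:ℝ)+1 := by push_cast; ring
    rw [hc]
    linarith [ih]

lemma harmonic_eq (n : ℕ) : (harmonic n : ℝ) = ∑ i ∈ Finset.range n, cc i := by
  unfold harmonic cc
  push_cast
  apply Finset.sum_congr rfl
  intro i _
  rw [one_div]

lemma oddH_eq (n : ℕ) : oddH 1 n = ∑ i ∈ Finset.range n, bb i := by
  unfold oddH bb
  simp [pow_one]

lemma harmonic_le_oddH (n : ℕ) : (harmonic n : ℝ) ≤ oddH 1 n := by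
  rw [harmonic_eq, oddH_eq]
  exact Finset.sum_le_sum (fun i _ => cc_le_bb i)

lemma harmonic_cast_nonneg (n : ℕ) : (0:ℝ) ≤ (harmonic n : ℝ) := by
  rw [harmonic_eq]
  exact Finset.sum_nonneg (fun i _ => (cc_pos i).le)

lemma summable_shift_pow (p : ℕ) (hp : 1 < p) : Summable (fun n : ℕ => 1 / ((n:ℝ)+1) ^ p) := by
  have h := (summable_nat_add_iff 1).2 (Real.summable_one_div_nat_pow.mpr hp)
  apply h.congr
  intro n
  push_cast
  ring

lemma summable_cc2 : Summable (fun n => cc n ^ 2) := by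
  apply (summable_shift_pow 2 (by norm_num)).congr
  intro n
  rw [cc, div_pow, one_pow]

lemma summable_cc3 : Summable (fun n => cc n ^ 3) := by
  apply (summable_shift_pow 3 (by norm_num)).congr
  intro n
  rw [cc, div_pow, one_pow]

lemma summable_bb2 : Summable (fun n => bb n ^ 2) := by
  apply Summable.of_nonneg_of_le (fun n => by positivity) _ (summable_cc2.mul_left 4)
  intro n
  have h1 := bb_le_two_cc n
  have h2 := (bb_pos n).le
  have h3 := (cc_pos n).le
  nlinarith

lemma summable_bb3 : Summable (fun n => bb n ^ 3) := by
  apply Summable.of_nonneg_of_le (fun n => pow_nonneg (bb_pos n).le 3) _ (summable_cc3.mul_left 8)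
  intro n
  calc bb n ^ 3 ≤ (2 * cc n) ^ 3 := pow_le_pow_left₀ (bb_pos n).le (bb_le_two_cc n) 3
  _ = 8 * cc n ^ 3 := by ring

lemma summable_sqrt32 : Summable (fun m : ℕ => Real.sqrt ((m:ℝ)+1) / ((m:ℝ)+1) ^ 2) := by
  have h0 : Summable (fun n : ℕ => 1 / (n:ℝ) ^ ((3:ℝ)/2)) :=
    Real.summable_one_div_nat_rpow.mpr (by norm_num)
  have h1 := (summable_nat_add_iff 1).2 h0
  apply h1.congr
  intro m
  have hx : (0:ℝ) < (m:ℝ)+1 := by positivity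
  push_cast
  rw [Real.sqrt_eq_rpow, eq_div_iff (by positivity), one_div, ← Real.rpow_neg hx.le,
    ← Real.rpow_natCast ((m:ℝ)+1) 2, ← Real.rpow_add hx]
  norm_num

lemma summable_bb2_shift (m : ℕ) : Summable (fun k : ℕ => bb (k + m + 1) ^ 2) :=
  (summable_nat_add_iff (f := fun n : ℕ => bb n ^ 2) (m+1)).2 summable_bb2

lemma summable_inv_sq_nat : Summable (fun n : ℕ => (1 / (n:ℝ)) ^ 2) := by
  apply (Real.summable_one_div_nat_pow.mpr (by norm_num : 1 < 2)).congr
  intro n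
  rw [div_pow, one_pow]

lemma summable_inv_sq_shift (m : ℕ) : Summable (fun k : ℕ => (1 / ((k + m + 1 : ℕ) : ℝ)) ^ 2) :=
  (summable_nat_add_iff (f := fun n : ℕ => (1/(n:ℝ))^2) (m+1)).2 summable_inv_sq_nat

lemma tsum_bb2_tail_le (m : ℕ) : ∑' k : ℕ, bb (k + m + 1) ^ 2 ≤ cc m := by
  have hts : HasSum (fun k => cc (k + m) - cc (k + 1 + m)) (cc m) := by
    have := hasSum_telescope (f := fun k => cc (k + m))
      (fun k l h => cc_anti (by omega)) (cc_tendsto.comp (tendsto_add_atTop_nat m)) 1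
    simpa using this
  have := Summable.tsum_le_tsum (f := fun k => bb (k + m + 1)^2)
    (g := fun k => cc (k + m) - cc (k + 1 + m)) ?_ (summable_bb2_shift m) hts.summable
  · rw [hts.tsum_eq] at this; exact this
  intro k
  unfold bb cc
  push_cast
  have h1 : (0:ℝ) < (k:ℝ)+(m:ℝ)+1 := by positivity
  have h2 : (0:ℝ) < (k:ℝ)+1+(m:ℝ)+1 := by positivity
  have h3 : (0:ℝ) < (k:ℝ)+(m:ℝ)+1+1/2 := by positivity
  rw [div_pow, one_pow, div_sub_div _ _ (ne_of_gt h1) (ne_of_gt h2),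
    div_le_div_iff₀ (by positivity) (by positivity)]
  ring_nf
  nlinarith

lemma tsum_inv_sq_tail_le (m : ℕ) : ∑' k : ℕ, (1 / ((k + m + 1 : ℕ) : ℝ)) ^ 2 ≤ bb m := by
  have hts : HasSum (fun k => bb (k + m) - bb (k + 1 + m)) (bb m) := by
    have := hasSum_telescope (f := fun k => bb (k + m))
      (fun k l h => bb_anti (by omega)) (bb_tendsto.comp (tendsto_add_atTop_nat m)) 1
    simpa using this
  have := Summable.tsum_le_tsum (f := fun k => (1 / ((k + m + 1 : ℕ) : ℝ)) ^ 2)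
    (g := fun k => bb (k + m) - bb (k + 1 + m)) ?_ (summable_inv_sq_shift m) hts.summable
  · rw [hts.tsum_eq] at this; exact this
  intro k
  unfold bb
  push_cast
  have h1 : (0:ℝ) < (k:ℝ)+(m:ℝ)+1/2 := by positivity
  have h2 : (0:ℝ) < (k:ℝ)+1+(m:ℝ)+1/2 := by positivity
  have h3 : (0:ℝ) < (k:ℝ)+(m:ℝ)+1 := by positivity
  rw [div_pow, one_pow, div_sub_div _ _ (ne_of_gt h1) (ne_of_gt h2),
    div_le_div_iff₀ (by positivity) (by positivity)]
  ring_nf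
  nlinarith

lemma summable_zeta_nat (p : ℕ) (hp : 1 < p) : Summable (fun n : ℕ => 1 / (n:ℝ) ^ p) :=
  Real.summable_one_div_nat_pow.mpr hp

lemma summable_odd_pow {p : ℕ} (hp : 1 < p) :
    Summable (fun k : ℕ => 1 / ((2*k+1 : ℕ) : ℝ) ^ p) := by
  apply Summable.of_nonneg_of_le (fun k => by positivity) _ (summable_shift_pow p hp)
  intro k
  apply one_div_le_one_div_of_le (by positivity)
  apply pow_le_pow_left₀ (by positivity)
  push_cast
  linarith [Nat.cast_nonneg (α := ℝ) k]

lemma summable_even_pow {p : ℕ} (hp : 1 < p) :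
    Summable (fun k : ℕ => 1 / ((2*k : ℕ) : ℝ) ^ p) := by
  apply ((summable_zeta_nat p hp).mul_left ((1:ℝ)/2^p)).congr
  intro k
  push_cast
  rcases Nat.eq_zero_or_pos k with hk | hk
  · subst hk; simp [zero_pow (by omega : p ≠ 0)]
  · have : ((k:ℝ)) ≠ 0 := Nat.cast_ne_zero.mpr (by omega)
    field_simp
    ring

lemma tsum_even_pow (p : ℕ) (hp : 1 < p) :
    ∑' k : ℕ, 1 / ((2*k : ℕ) : ℝ) ^ p = (1/2^p) * ∑' n : ℕ, 1 / (n:ℝ) ^ p := by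
  rw [← tsum_mul_left]
  apply tsum_congr
  intro k
  push_cast
  rcases Nat.eq_zero_or_pos k with hk | hk
  · subst hk; simp [zero_pow (by omega : p ≠ 0)]
  · have : ((k:ℝ)) ≠ 0 := Nat.cast_ne_zero.mpr (by omega)
    field_simp
    ring

lemma tsum_odd_pow_eq (p : ℕ) (hp : 1 < p) :
    ∑' k : ℕ, 1 / ((2*k+1 : ℕ) : ℝ) ^ p
      = (1 - 1/2^p) * ∑' n : ℕ, 1 / (n:ℝ) ^ p := by
  have h := tsum_even_add_odd (f := fun n : ℕ => 1 / (n:ℝ) ^ p)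
    ((summable_even_pow hp).congr (fun k => by push_cast; ring_nf))
    ((summable_odd_pow hp).congr (fun k => by push_cast; ring_nf))
  beta_reduce at h
  rw [tsum_even_pow p hp] at h
  linarith [h]

lemma tsum_zeta_nat_two : ∑' n : ℕ, 1 / (n:ℝ) ^ 2 = Real.pi ^ 2 / 6 :=
  hasSum_zeta_two.tsum_eq

lemma tsum_zeta_nat_three : ∑' n : ℕ, 1 / (n:ℝ) ^ 3 = zetaR 3 := by
  rw [Summable.tsum_eq_zero_add (summable_zeta_nat 3 (by norm_num))]
  have h0 : 1 / ((0:ℕ):ℝ) ^ 3 = 0 := by norm_num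
  rw [h0, zero_add]
  unfold zetaR
  apply tsum_congr
  intro n
  push_cast
  ring_nf

lemma tsum_bb2 : ∑' n : ℕ, bb n ^ 2 = Real.pi ^ 2 / 2 := by
  have key : ∀ n : ℕ, bb n ^ 2 = 4 * (1 / ((2*n+1 : ℕ) : ℝ) ^ 2) := by
    intro n
    unfold bb
    have h1 : ((n:ℝ) + 1/2) ≠ 0 := by positivity
    have h2 : ((2*n+1 : ℕ) : ℝ) ≠ 0 := by positivity
    push_cast at h2 ⊢
    field_simp
    ring
  calc ∑' n : ℕ, bb n ^ 2 = ∑' n : ℕ, 4 * (1 / ((2*n+1 : ℕ) : ℝ) ^ 2) := tsum_congr key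
  _ = 4 * ∑' n : ℕ, 1 / ((2*n+1 : ℕ) : ℝ) ^ 2 := tsum_mul_left
  _ = 4 * ((1 - 1/2^2) * (Real.pi ^ 2 / 6)) := by
      rw [tsum_odd_pow_eq 2 (by norm_num), tsum_zeta_nat_two]
  _ = Real.pi ^ 2 / 2 := by ring

lemma tsum_bb3 : ∑' n : ℕ, bb n ^ 3 = 7 * zetaR 3 := by
  have key : ∀ n : ℕ, bb n ^ 3 = 8 * (1 / ((2*n+1 : ℕ) : ℝ) ^ 3) := by
    intro n
    unfold bb
    have h1 : ((n:ℝ) + 1/2) ≠ 0 := by positivity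
    have h2 : ((2*n+1 : ℕ) : ℝ) ≠ 0 := by positivity
    push_cast at h2 ⊢
    field_simp
    ring
  calc ∑' n : ℕ, bb n ^ 3 = ∑' n : ℕ, 8 * (1 / ((2*n+1 : ℕ) : ℝ) ^ 3) := tsum_congr key
  _ = 8 * ∑' n : ℕ, 1 / ((2*n+1 : ℕ) : ℝ) ^ 3 := tsum_mul_left
  _ = 8 * ((1 - 1/2^3) * zetaR 3) := by
      rw [tsum_odd_pow_eq 3 (by norm_num), tsum_zeta_nat_three]
  _ = 7 * zetaR 3 := by ring

lemma HasSum.congr_fun' {f g : ℕ → ℝ} {a : ℝ} (h : HasSum f a) (hfg : ∀ k, f k = g k) :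
    HasSum g a := (funext hfg : f = g) ▸ h

lemma hasSum_U_row (m : ℕ) :
    HasSum (fun k => bb k - bb (k + (m+1))) (oddH 1 (m+1)) := by
  have h := hasSum_telescope (f := bb) bb_anti bb_tendsto (m+1)
  rwa [← oddH_eq] at h

lemma hasSum_cc_step (m : ℕ) :
    HasSum (fun k : ℕ => 1/((k:ℝ)+(m:ℝ)+1) - 1/((k:ℝ)+(m:ℝ)+2)) (1/((m:ℝ)+1)) := by
  have h := hasSum_telescope (f := fun k => cc (k+m)) (fun k l hkl => cc_anti (by omega))
    (cc_tendsto.comp (tendsto_add_atTop_nat m)) 1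
  have h2 : ∑ i ∈ Finset.range 1, cc (i+m) = 1/((m:ℝ)+1) := by
    simp [cc]
  rw [h2] at h
  apply h.congr_fun'
  intro k
  unfold cc
  push_cast
  ring_nf

lemma hasSum_bb_step (m : ℕ) :
    HasSum (fun k : ℕ => 1/((k:ℝ)+(m:ℝ)+1/2) - 1/((k:ℝ)+(m:ℝ)+3/2)) (1/((m:ℝ)+1/2)) := by
  have h := hasSum_telescope (f := fun k => bb (k+m)) (fun k l hkl => bb_anti (by omega))
    (bb_tendsto.comp (tendsto_add_atTop_nat m)) 1
  have h2 : ∑ i ∈ Finset.range 1, bb (i+m) = 1/((m:ℝ)+1/2) := by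
    simp [bb]
  rw [h2] at h
  apply h.congr_fun'
  intro k
  unfold bb
  push_cast
  ring_nf

/-- digamma-type sum (i): ∑ₖ (1/(k+1/2) − 1/(k+m+1)) = Hₘ + 2 log 2 -/
lemma hasSum_P_row (m : ℕ) :
    HasSum (fun k : ℕ => bb k - 1/((k:ℝ) + (m:ℝ) + 1)) ((harmonic m : ℝ) + 2*Real.log 2) := by
  induction m with
  | zero =>
    have h := hasSum_two_log_two
    have hv : 2*Real.log 2 = ((harmonic 0 : ℚ):ℝ) + 2*Real.log 2 := by simp
    rw [hv] at h
    apply h.congr_fun'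
    intro k
    unfold cc
    push_cast
    ring_nf
  | succ m ih =>
    have h := ih.add (hasSum_cc_step m)
    have hv : (harmonic m:ℝ) + 2*Real.log 2 + 1/((m:ℝ)+1)
        = ((harmonic (m+1) : ℚ):ℝ) + 2*Real.log 2 := by
      rw [harmonic_succ]; push_cast; ring
    rw [hv] at h
    apply h.congr_fun'
    intro k
    push_cast
    ring_nf

/-- digamma-type sum (ii): ∑ⱼ (1/(j+1) − 1/(j+m+3/2)) = h_{m+1} − 2 log 2 -/
lemma hasSum_V_row (m : ℕ) :
    HasSum (fun j : ℕ => 1/((j:ℝ)+1) - 1/((j:ℝ)+(m:ℝ)+3/2)) (oddH 1 (m+1) - 2*Real.log 2) := by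
  induction m with
  | zero =>
    have h := (hasSum_two_log_two.neg).add (hasSum_U_row 0)
    have hv : -(2*Real.log 2) + oddH 1 (0+1) = oddH 1 (0+1) - 2*Real.log 2 := by ring
    rw [hv] at h
    apply h.congr_fun'
    intro j
    unfold bb cc
    push_cast
    ring_nf
  | succ m ih =>
    have hstep := hasSum_bb_step (m+1)
    have h := ih.add hstep
    have hv : oddH 1 (m+1) - 2*Real.log 2 + 1/(((m+1:ℕ):ℝ)+1/2)
        = oddH 1 (m+1+1) - 2*Real.log 2 := by
      conv_rhs => rw [oddH_succ]
      unfold bb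
      push_cast
      ring
    rw [hv] at h
    apply h.congr_fun'
    intro j
    push_cast
    ring_nf

/-- Reindexing: a sum over pairs (m,k) ↦ (n,k) with n = k+m+1 equals the triangular sum. -/
lemma tsum_triangle (f : ℕ → ℕ → ℝ) (hs : Summable (fun p : ℕ × ℕ => f (p.2 + p.1 + 1) p.2)) :
    ∑' p : ℕ × ℕ, f (p.2 + p.1 + 1) p.2 = ∑' n : ℕ, ∑ k ∈ Finset.range n, f n k := by
  classical
  set i : ℕ × ℕ → ℕ × ℕ := fun p => (p.2 + p.1 + 1, p.2) with hi
  set g : ℕ × ℕ → ℝ := fun q => if q.2 < q.1 then f q.1 q.2 else 0 with hg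
  have hinj : Function.Injective i := by
    intro p q hpq
    simp only [hi, Prod.mk.injEq] at hpq
    exact Prod.ext_iff.mpr ⟨by omega, hpq.2⟩
  have hcomp : ∀ p : ℕ × ℕ, g (i p) = f (p.2 + p.1 + 1) p.2 := by
    intro p
    simp only [hg, hi]
    rw [if_pos (by omega)]
  have hzero : ∀ q ∉ Set.range i, g q = 0 := by
    intro q hq
    simp only [hg]
    rw [if_neg]
    intro hlt
    exact hq ⟨(q.1 - q.2 - 1, q.2), Prod.ext_iff.mpr ⟨by simp only [hi]; omega, rfl⟩⟩
  have hgsum : Summable g := by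
    rw [← hinj.summable_iff hzero]
    exact hs.congr (fun p => (hcomp p).symm)
  have h1 : ∑' p : ℕ × ℕ, f (p.2 + p.1 + 1) p.2 = ∑' q : ℕ × ℕ, g q := by
    rw [← hinj.tsum_eq (Function.support_subset_iff'.mpr hzero)]
    exact tsum_congr hcomp |>.symm
  rw [h1, Summable.tsum_prod' hgsum (fun n => hgsum.prod_factor n)]
  apply tsum_congr
  intro n
  rw [tsum_eq_sum (s := Finset.range n)
    (fun k hk => by simp only [hg]; rw [if_neg (by simpa using hk)])]
  apply Finset.sum_congr rfl
  intro k hk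
  simp only [hg]
  rw [if_pos (Finset.mem_range.mp hk)]

lemma tsum_swap (F : ℕ × ℕ → ℝ) : ∑' p : ℕ × ℕ, F p.swap = ∑' p : ℕ × ℕ, F p :=
  (Equiv.prodComm ℕ ℕ).tsum_eq F

noncomputable def SS (p : ℕ × ℕ) : ℝ := bb p.2 * bb (p.2 + p.1 + 1) ^ 2
noncomputable def UU (p : ℕ × ℕ) : ℝ := (bb p.2 - bb (p.2 + p.1 + 1)) / ((p.1:ℝ)+1)^2
noncomputable def TT (p : ℕ × ℕ) : ℝ := bb (p.2 + p.1 + 1) ^ 2 / ((p.1:ℝ)+1)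
noncomputable def EE (p : ℕ × ℕ) : ℝ := bb (p.2 + p.1 + 1) ^ 2 / ((p.2:ℝ)+1)
noncomputable def WW (p : ℕ × ℕ) : ℝ := bb p.1 * bb (p.2 + p.1 + 1) ^ 2
noncomputable def VV (p : ℕ × ℕ) : ℝ :=
  (1/((p.2:ℝ)+1) - 1/((p.2:ℝ)+(p.1:ℝ)+3/2)) / ((p.1:ℝ)+1/2)^2
noncomputable def XX (p : ℕ × ℕ) : ℝ := bb p.2 / (((p.2 + p.1 + 1 : ℕ)):ℝ)^2
noncomputable def PP (p : ℕ × ℕ) : ℝ := (bb p.2 - 1/((p.2:ℝ)+(p.1:ℝ)+1)) / ((p.1:ℝ)+1/2)^2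
noncomputable def QQ (p : ℕ × ℕ) : ℝ := bb p.1 / (((p.2 + p.1 + 1 : ℕ)):ℝ)^2

lemma idA (p : ℕ × ℕ) : SS p = UU p - TT p := by
  obtain ⟨m, k⟩ := p
  unfold SS UU TT bb
  push_cast
  have h1 : ((k:ℝ)+1/2) ≠ 0 := by positivity
  have h2 : ((k:ℝ)+(m:ℝ)+1+1/2) ≠ 0 := by positivity
  have h3 : ((m:ℝ)+1) ≠ 0 := by positivity
  field_simp
  ring

lemma idB (p : ℕ × ℕ) : EE p = VV p - WW p := by
  obtain ⟨m, j⟩ := p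
  unfold EE VV WW bb
  push_cast
  have h1 : ((j:ℝ)+1) ≠ 0 := by positivity
  have h2 : ((j:ℝ)+(m:ℝ)+1+1/2) ≠ 0 := by positivity
  have h3 : ((m:ℝ)+1/2) ≠ 0 := by positivity
  have h4 : ((j:ℝ)+(m:ℝ)+3/2) ≠ 0 := by positivity
  rw [show (j:ℝ)+(m:ℝ)+1+1/2 = (j:ℝ)+(m:ℝ)+3/2 from by ring]
  field_simp
  ring

lemma idC (p : ℕ × ℕ) : XX p = PP p - QQ p := by
  obtain ⟨m, k⟩ := p
  unfold XX PP QQ bb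
  push_cast
  have h1 : ((k:ℝ)+1/2) ≠ 0 := by positivity
  have h2 : ((k:ℝ)+(m:ℝ)+1) ≠ 0 := by positivity
  have h3 : ((m:ℝ)+1/2) ≠ 0 := by positivity
  field_simp
  ring

lemma TT_swap (p : ℕ × ℕ) : EE p.swap = TT p := by
  unfold EE TT
  rw [show p.swap.2 + p.swap.1 + 1 = p.2 + p.1 + 1 from by simp [Prod.swap]; omega]
  rfl

lemma WW_swap (p : ℕ × ℕ) : SS p.swap = WW p := by
  unfold SS WW
  rw [show p.swap.2 + p.swap.1 + 1 = p.2 + p.1 + 1 from by simp [Prod.swap]; omega]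
  rfl

lemma QQ_swap (p : ℕ × ℕ) : XX p.swap = QQ p := by
  unfold XX QQ
  rw [show p.swap.2 + p.swap.1 + 1 = p.2 + p.1 + 1 from by simp [Prod.swap]; omega]
  rfl

lemma oddH_cast_bound (m : ℕ) : oddH 1 (m+1) ≤ 4 * Real.sqrt ((m:ℝ)+1) := by
  have h := oddH_le_sqrt (m+1)
  rwa [show ((m+1:ℕ):ℝ) = (m:ℝ)+1 from by push_cast; ring] at h

lemma bb_sq_le (m : ℕ) : bb m ^ 2 ≤ 4 * (1/((m:ℝ)+1)^2) := by
  have h1 := bb_le_two_cc m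
  have h2 := (bb_pos m).le
  have h3 := (cc_pos m).le
  have : bb m ^ 2 ≤ (2 * cc m)^2 := by nlinarith
  calc bb m ^2 ≤ (2*cc m)^2 := this
  _ = 4 * (1/((m:ℝ)+1)^2) := by rw [cc, mul_pow, div_pow, one_pow]; norm_num

lemma inv_bb_sq (x : ℝ) (m : ℕ) : x / ((m:ℝ)+1/2)^2 = x * bb m ^ 2 := by
  rw [bb, div_pow, one_pow, one_div, div_eq_mul_inv, one_div]

lemma summable_s1 : Summable (fun m : ℕ => oddH 1 (m+1) / ((m:ℝ)+1)^2) := by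
  apply Summable.of_nonneg_of_le
    (fun m => div_nonneg (oddH_nonneg (m+1)) (by positivity))
    _ (summable_sqrt32.mul_left 4)
  intro m
  have h1 := oddH_cast_bound m
  have h2 : (0:ℝ) < ((m:ℝ)+1)^2 := by positivity
  rw [div_le_iff₀ h2, mul_assoc, div_mul_cancel₀ _ (ne_of_gt h2)]
  exact h1

lemma summable_s3 : Summable (fun m : ℕ => oddH 1 (m+1) * bb m ^ 2) := by
  apply Summable.of_nonneg_of_le
    (fun m => mul_nonneg (oddH_nonneg (m+1)) (by positivity)) _ (summable_sqrt32.mul_left 16)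
  intro m
  have h1 := oddH_cast_bound m
  have h2 := bb_sq_le m
  have h3 := oddH_nonneg (m+1)
  have h4 : (0:ℝ) ≤ bb m ^2 := by positivity
  have h5 : (0:ℝ) ≤ Real.sqrt ((m:ℝ)+1) := Real.sqrt_nonneg _
  calc oddH 1 (m+1) * bb m ^ 2 ≤ (4*Real.sqrt ((m:ℝ)+1)) * (4 * (1/((m:ℝ)+1)^2)) := by
        apply mul_le_mul h1 h2 h4 (by positivity)
  _ = 16 * (Real.sqrt ((m:ℝ)+1) / ((m:ℝ)+1)^2) := by ring

lemma oddH_mono {a b : ℕ} (h : a ≤ b) : oddH 1 a ≤ oddH 1 b := by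
  rw [oddH_eq, oddH_eq]
  apply Finset.sum_le_sum_of_subset_of_nonneg (Finset.range_subset_range.mpr h)
  intro i _ _
  exact (bb_pos i).le

lemma summable_s5 : Summable (fun m : ℕ => oddH 1 m * bb m ^ 2) := by
  apply Summable.of_nonneg_of_le
    (fun m => mul_nonneg (oddH_nonneg m) (by positivity)) _ summable_s3
  intro m
  exact mul_le_mul_of_nonneg_right (oddH_mono (Nat.le_succ m)) (by positivity)

lemma summable_s4 : Summable (fun m : ℕ => (harmonic m : ℝ) * bb m ^ 2) := by
  apply Summable.of_nonneg_of_le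
    (fun m => mul_nonneg (harmonic_cast_nonneg m) (by positivity)) _ summable_s5
  intro m
  exact mul_le_mul_of_nonneg_right (harmonic_le_oddH m) (by positivity)

lemma summable_s6 : Summable (fun d : ℕ => oddH 1 d / (d:ℝ)^2) := by
  apply (summable_nat_add_iff (f := fun d : ℕ => oddH 1 d / (d:ℝ)^2) 1).mp
  apply summable_s1.congr
  intro m
  push_cast
  ring_nf

lemma hasSum_UU_row (m : ℕ) :
    HasSum (fun k => UU (m, k)) (oddH 1 (m+1) / ((m:ℝ)+1)^2) :=
  (hasSum_U_row m).div_const (((m:ℝ)+1)^2)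

lemma hasSum_VV_row' (m : ℕ) :
    HasSum (fun k => VV (m, k)) ((oddH 1 (m+1) - 2*Real.log 2) / ((m:ℝ)+1/2)^2) :=
  (hasSum_V_row m).div_const (((m:ℝ)+1/2)^2)

lemma hasSum_PP_row' (m : ℕ) :
    HasSum (fun k => PP (m, k)) (((harmonic m : ℝ) + 2*Real.log 2) / ((m:ℝ)+1/2)^2) :=
  (hasSum_P_row m).div_const (((m:ℝ)+1/2)^2)

lemma UU_nonneg (p : ℕ × ℕ) : 0 ≤ UU p :=
  div_nonneg (sub_nonneg.2 (bb_anti (by omega))) (by positivity)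

lemma TT_nonneg (p : ℕ × ℕ) : 0 ≤ TT p := div_nonneg (by positivity) (by positivity)
lemma EE_nonneg (p : ℕ × ℕ) : 0 ≤ EE p := div_nonneg (by positivity) (by positivity)
lemma SS_nonneg (p : ℕ × ℕ) : 0 ≤ SS p := mul_nonneg (bb_pos _).le (by positivity)
lemma WW_nonneg (p : ℕ × ℕ) : 0 ≤ WW p := mul_nonneg (bb_pos _).le (by positivity)
lemma QQ_nonneg (p : ℕ × ℕ) : 0 ≤ QQ p := div_nonneg (bb_pos _).le (by positivity)
lemma XX_nonneg (p : ℕ × ℕ) : 0 ≤ XX p := div_nonneg (bb_pos _).le (by positivity)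

lemma VV_nonneg (p : ℕ × ℕ) : 0 ≤ VV p := by
  apply div_nonneg _ (by positivity)
  rw [sub_nonneg]
  apply one_div_le_one_div_of_le (by positivity)
  have := Nat.cast_nonneg (α := ℝ) p.1
  linarith

lemma PP_nonneg (p : ℕ × ℕ) : 0 ≤ PP p := by
  apply div_nonneg _ (by positivity)
  rw [sub_nonneg, bb]
  apply one_div_le_one_div_of_le (by positivity)
  have := Nat.cast_nonneg (α := ℝ) p.1
  linarith

lemma log_two_nonneg : (0:ℝ) ≤ Real.log 2 := Real.log_nonneg (by norm_num)
lemma log_two_le_one : Real.log 2 ≤ 1 := by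
  have := Real.log_le_sub_one_of_pos (by norm_num : (0:ℝ) < 2)
  linarith

lemma summable_UU : Summable UU := by
  rw [summable_prod_of_nonneg (fun p => UU_nonneg p)]
  refine ⟨fun m => (hasSum_UU_row m).summable, ?_⟩
  apply Summable.of_nonneg_of_le (fun m => tsum_nonneg (fun k => UU_nonneg _)) _ summable_s1
  intro m
  exact le_of_eq (hasSum_UU_row m).tsum_eq

lemma TT_row_eq (m : ℕ) : ∀ k, TT (m, k) = bb (k + m + 1) ^ 2 * cc m := by
  intro k
  show bb (k + m + 1) ^ 2 / ((m:ℝ)+1) = _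
  rw [cc, mul_one_div]

lemma summable_TT : Summable TT := by
  rw [summable_prod_of_nonneg (fun p => TT_nonneg p)]
  constructor
  · intro m
    exact ((summable_bb2_shift m).mul_right (cc m)).congr (fun k => (TT_row_eq m k).symm)
  · apply Summable.of_nonneg_of_le (fun m => tsum_nonneg (fun k => TT_nonneg _)) _ summable_cc2
    intro m
    have h1 : ∑' k, TT (m, k) = (∑' k, bb (k + m + 1) ^ 2) * cc m := by
      rw [← tsum_mul_right]
      exact tsum_congr (TT_row_eq m)
    rw [h1, sq]
    exact mul_le_mul_of_nonneg_right (tsum_bb2_tail_le m) (cc_pos m).le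

lemma WW_row_eq (m : ℕ) : ∀ k, WW (m, k) = bb (k + m + 1) ^ 2 * bb m := by
  intro k
  show bb m * bb (k + m + 1) ^ 2 = _
  ring

lemma summable_WW : Summable WW := by
  rw [summable_prod_of_nonneg (fun p => WW_nonneg p)]
  constructor
  · intro m
    exact ((summable_bb2_shift m).mul_right (bb m)).congr (fun k => (WW_row_eq m k).symm)
  · apply Summable.of_nonneg_of_le (fun m => tsum_nonneg (fun k => WW_nonneg _)) _ summable_bb2
    intro m
    have h1 : ∑' k, WW (m, k) = (∑' k, bb (k + m + 1) ^ 2) * bb m := by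
      rw [← tsum_mul_right]
      exact tsum_congr (WW_row_eq m)
    rw [h1, sq]
    apply mul_le_mul_of_nonneg_right _ (bb_pos m).le
    exact (tsum_bb2_tail_le m).trans (cc_le_bb m)

lemma QQ_row_eq (m : ℕ) : ∀ k, QQ (m, k) = (1 / ((k + m + 1 : ℕ):ℝ)) ^ 2 * bb m := by
  intro k
  show bb m / (((k + m + 1 : ℕ)):ℝ)^2 = _
  rw [div_pow, one_pow, one_div, div_eq_mul_inv]
  ring

lemma summable_QQ : Summable QQ := by
  rw [summable_prod_of_nonneg (fun p => QQ_nonneg p)]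
  constructor
  · intro m
    exact ((summable_inv_sq_shift m).mul_right (bb m)).congr (fun k => (QQ_row_eq m k).symm)
  · apply Summable.of_nonneg_of_le (fun m => tsum_nonneg (fun k => QQ_nonneg _)) _ summable_bb2
    intro m
    have h1 : ∑' k, QQ (m, k) = (∑' k, (1 / ((k + m + 1 : ℕ):ℝ)) ^ 2) * bb m := by
      rw [← tsum_mul_right]
      exact tsum_congr (QQ_row_eq m)
    rw [h1, sq]
    exact mul_le_mul_of_nonneg_right (tsum_inv_sq_tail_le m) (bb_pos m).le

lemma summable_VV : Summable VV := by
  rw [summable_prod_of_nonneg (fun p => VV_nonneg p)]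
  refine ⟨fun m => (hasSum_VV_row' m).summable, ?_⟩
  apply Summable.of_nonneg_of_le (fun m => tsum_nonneg (fun k => VV_nonneg _)) _ summable_s3
  intro m
  rw [(hasSum_VV_row' m).tsum_eq, inv_bb_sq]
  apply mul_le_mul_of_nonneg_right _ (by positivity)
  linarith [log_two_nonneg]

lemma summable_PP : Summable PP := by
  rw [summable_prod_of_nonneg (fun p => PP_nonneg p)]
  refine ⟨fun m => (hasSum_PP_row' m).summable, ?_⟩
  apply Summable.of_nonneg_of_le (fun m => tsum_nonneg (fun k => PP_nonneg _)) _
    (summable_s3.add (summable_bb2.mul_left 2))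
  intro m
  rw [(hasSum_PP_row' m).tsum_eq, inv_bb_sq]
  have h1 : (harmonic m : ℝ) + 2*Real.log 2 ≤ oddH 1 (m+1) + 2 := by
    have := (harmonic_le_oddH m).trans (oddH_mono (Nat.le_succ m))
    have := log_two_le_one
    linarith
  calc ((harmonic m : ℝ) + 2*Real.log 2) * bb m ^ 2 ≤ (oddH 1 (m+1) + 2) * bb m ^ 2 :=
        mul_le_mul_of_nonneg_right h1 (by positivity)
  _ = oddH 1 (m+1) * bb m ^ 2 + 2 * bb m ^ 2 := by ring

lemma summable_SS : Summable SS := (summable_UU.sub summable_TT).congr (fun p => (idA p).symm)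
lemma summable_EE : Summable EE := (summable_VV.sub summable_WW).congr (fun p => (idB p).symm)
lemma summable_XX : Summable XX := (summable_PP.sub summable_QQ).congr (fun p => (idC p).symm)

lemma tsum_SS_eq : ∑' p : ℕ × ℕ, SS p = ∑' n : ℕ, oddH 1 n * bb n ^ 2 := by
  have h := tsum_triangle (fun n k => bb k * bb n ^ 2) summable_SS
  beta_reduce at h
  unfold SS
  rw [h]
  apply tsum_congr
  intro n
  rw [oddH_eq, Finset.sum_mul]

lemma tsum_EE_eq : ∑' p : ℕ × ℕ, EE p = ∑' n : ℕ, (harmonic n : ℝ) * bb n ^ 2 := by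
  have h := tsum_triangle (fun n k => bb n ^ 2 / ((k:ℝ)+1)) summable_EE
  beta_reduce at h
  unfold EE
  rw [h]
  apply tsum_congr
  intro n
  rw [harmonic_eq, Finset.sum_mul]
  apply Finset.sum_congr rfl
  intro k _
  rw [cc, one_div, div_eq_mul_inv, mul_comm]

lemma tsum_XX_eq : ∑' p : ℕ × ℕ, XX p = ∑' d : ℕ, oddH 1 d / (d:ℝ)^2 := by
  have h := tsum_triangle (fun n k => bb k / ((n:ℕ):ℝ)^2) summable_XX
  beta_reduce at h
  unfold XX
  rw [h]
  apply tsum_congr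
  intro d
  rw [oddH_eq, Finset.sum_div]

lemma tsum_TT_eq : ∑' p : ℕ × ℕ, TT p = ∑' p : ℕ × ℕ, EE p := by
  calc ∑' p : ℕ × ℕ, TT p = ∑' p : ℕ × ℕ, EE p.swap := tsum_congr (fun p => (TT_swap p).symm)
  _ = ∑' p : ℕ × ℕ, EE p := tsum_swap EE

lemma tsum_WW_eq : ∑' p : ℕ × ℕ, WW p = ∑' p : ℕ × ℕ, SS p := by
  calc ∑' p : ℕ × ℕ, WW p = ∑' p : ℕ × ℕ, SS p.swap := tsum_congr (fun p => (WW_swap p).symm)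
  _ = ∑' p : ℕ × ℕ, SS p := tsum_swap SS

lemma tsum_QQ_eq : ∑' p : ℕ × ℕ, QQ p = ∑' p : ℕ × ℕ, XX p := by
  calc ∑' p : ℕ × ℕ, QQ p = ∑' p : ℕ × ℕ, XX p.swap := tsum_congr (fun p => (QQ_swap p).symm)
  _ = ∑' p : ℕ × ℕ, XX p := tsum_swap XX

lemma tsum_UU_eq : ∑' p : ℕ × ℕ, UU p = ∑' m : ℕ, oddH 1 (m+1) / ((m:ℝ)+1)^2 := by
  rw [Summable.tsum_prod' summable_UU (fun m => (hasSum_UU_row m).summable)]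
  exact tsum_congr (fun m => (hasSum_UU_row m).tsum_eq)

lemma tsum_VV_eq : ∑' p : ℕ × ℕ, VV p
    = ∑' m : ℕ, (oddH 1 (m+1) - 2*Real.log 2) * bb m ^ 2 := by
  rw [Summable.tsum_prod' summable_VV (fun m => (hasSum_VV_row' m).summable)]
  exact tsum_congr (fun m => by rw [(hasSum_VV_row' m).tsum_eq, inv_bb_sq])

lemma tsum_PP_eq : ∑' p : ℕ × ℕ, PP p
    = ∑' m : ℕ, ((harmonic m : ℝ) + 2*Real.log 2) * bb m ^ 2 := by
  rw [Summable.tsum_prod' summable_PP (fun m => (hasSum_PP_row' m).summable)]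
  exact tsum_congr (fun m => by rw [(hasSum_PP_row' m).tsum_eq, inv_bb_sq])

lemma tsum_VV_val : ∑' m : ℕ, (oddH 1 (m+1) - 2*Real.log 2) * bb m ^ 2
    = (∑' n : ℕ, oddH 1 n * bb n ^ 2) + 7 * zetaR 3 - 2*Real.log 2*(Real.pi^2/2) := by
  have e1 : ∀ m : ℕ, (oddH 1 (m+1) - 2*Real.log 2) * bb m ^ 2
      = (oddH 1 m * bb m ^ 2 + bb m ^ 3) - 2*Real.log 2 * bb m ^ 2 := by
    intro m; rw [oddH_succ]; ring
  rw [tsum_congr e1, Summable.tsum_sub (summable_s5.add summable_bb3) (summable_bb2.mul_left _),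
    Summable.tsum_add summable_s5 summable_bb3, tsum_mul_left, tsum_bb2, tsum_bb3]

lemma tsum_PP_val : ∑' m : ℕ, ((harmonic m : ℝ) + 2*Real.log 2) * bb m ^ 2
    = (∑' n : ℕ, (harmonic n : ℝ) * bb n ^ 2) + 2*Real.log 2*(Real.pi^2/2) := by
  have e1 : ∀ m : ℕ, ((harmonic m : ℝ) + 2*Real.log 2) * bb m ^ 2
      = (harmonic m : ℝ) * bb m ^ 2 + 2*Real.log 2 * bb m ^ 2 := by
    intro m; ring
  rw [tsum_congr e1, Summable.tsum_add summable_s4 (summable_bb2.mul_left _), tsum_mul_left, tsum_bb2]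

lemma tsum_X_shift : ∑' d : ℕ, oddH 1 d / (d:ℝ)^2 = ∑' m : ℕ, oddH 1 (m+1) / ((m:ℝ)+1)^2 := by
  rw [Summable.tsum_eq_zero_add summable_s6]
  have h0 : oddH 1 0 / ((0:ℕ):ℝ)^2 = 0 := by simp [oddH]
  rw [h0, zero_add]
  apply tsum_congr
  intro m
  push_cast
  ring_nf

/-- ∑_{n=1}^∞ h_{n−1}/(n−1/2)² = π²·log 2 − (7/2)ζ(3) -/
theorem linear_T_sum_half :
    (∑' n : ℕ, oddH 1 n / ((n : ℝ) + 1 / 2) ^ 2) =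
      Real.pi ^ 2 * Real.log 2 - 7 / 2 * zetaR 3 := by
  have hVV : ∑' p : ℕ × ℕ, VV p
      = (∑' n : ℕ, oddH 1 n * bb n ^ 2) + 7 * zetaR 3 - 2*Real.log 2*(Real.pi^2/2) := by
    rw [tsum_VV_eq, tsum_VV_val]
  have hWW : ∑' p : ℕ × ℕ, WW p = ∑' n : ℕ, oddH 1 n * bb n ^ 2 := by
    rw [tsum_WW_eq, tsum_SS_eq]
  have eqB : ∑' n : ℕ, (harmonic n : ℝ) * bb n ^ 2
      = 7 * zetaR 3 - 2*Real.log 2*(Real.pi^2/2) := by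
    have h : ∑' p : ℕ × ℕ, EE p = ∑' p : ℕ × ℕ, VV p - ∑' p : ℕ × ℕ, WW p := by
      rw [← Summable.tsum_sub summable_VV summable_WW]
      exact tsum_congr idB
    rw [tsum_EE_eq] at h
    rw [h, hVV, hWW]
    ring
  have hPP : ∑' p : ℕ × ℕ, PP p
      = (∑' n : ℕ, (harmonic n : ℝ) * bb n ^ 2) + 2*Real.log 2*(Real.pi^2/2) := by
    rw [tsum_PP_eq, tsum_PP_val]
  have hXv : ∑' p : ℕ × ℕ, XX p = ∑' m : ℕ, oddH 1 (m+1) / ((m:ℝ)+1)^2 := by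
    rw [tsum_XX_eq, tsum_X_shift]
  have eqC : ∑' m : ℕ, oddH 1 (m+1) / ((m:ℝ)+1)^2 = (7 * zetaR 3) / 2 := by
    have h : ∑' p : ℕ × ℕ, XX p = ∑' p : ℕ × ℕ, PP p - ∑' p : ℕ × ℕ, QQ p := by
      rw [← Summable.tsum_sub summable_PP summable_QQ]
      exact tsum_congr idC
    rw [tsum_QQ_eq, hXv, hPP, eqB] at h
    linarith
  have eqA : ∑' n : ℕ, oddH 1 n * bb n ^ 2
      = (∑' m : ℕ, oddH 1 (m+1) / ((m:ℝ)+1)^2) - ∑' n : ℕ, (harmonic n : ℝ) * bb n ^ 2 := by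
    have h : ∑' p : ℕ × ℕ, SS p = ∑' p : ℕ × ℕ, UU p - ∑' p : ℕ × ℕ, TT p := by
      rw [← Summable.tsum_sub summable_UU summable_TT]
      exact tsum_congr idA
    rw [tsum_SS_eq, tsum_UU_eq, tsum_TT_eq, tsum_EE_eq] at h
    exact h
  have hfinal : ∑' n : ℕ, oddH 1 n * bb n ^ 2
      = Real.pi ^ 2 * Real.log 2 - 7 / 2 * zetaR 3 := by
    rw [eqA, eqC, eqB]
    ring
  rw [← hfinal]
  apply tsum_congr
  intro n
  exact inv_bb_sq (oddH 1 n) n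
end
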